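/- arXiv:1308.3074 — 7 statements merged into one kernel-verified Lean document; each statement's English description precedes it below -/
import Mathlib

section
/- For every n ≥ 4, the graph Q_n is indecomposable, where Q_n has vertex set {1,…,n} and edge set E(P_{n−2}) ∪ { {n−1, i} : i ∈ {1,…,n} \ {n−1, n−2} }. -/
/-!
In index terms (index `i` is the paper's vertex `i + 1`) `Q n` consists of the path
`0, …, n - 3`, the hub `n - 2`, adjacent to everything except itself and `n - 3`, and the
pendant vertex `n - 1`, adjacent only to the hub. Let `I` be an interval with two vertices;
a vertex outside `I` cannot separate two vertices of `I`. Two path vertices of `I` drag the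
path into `I` up to `n - 3`, which the hub then separates from the lower one, so the hub lies
in `I`; a path vertex together with the pendant vertex first drags in a path neighbour. The
pendant vertex separates the hub from any other vertex, and hub and pendant vertex together
separate every path vertex but `n - 3`, which is in turn separated by its path neighbour.
-/

open SimpleGraph

variable {V : Type*}

/-- `I` is an interval (module) of `G`: every vertex outside `I` is adjacent
either to all or to none of the vertices of `I`. -/
def IsInterval (G : SimpleGraph V) (I : Set V) : Prop :=
  ∀ x ∉ I, ∀ a ∈ I, ∀ b ∈ I, (G.Adj a x ↔ G.Adj b x)

/-- A graph is indecomposable if its only intervals are trivial. -/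
def Indecomposable (G : SimpleGraph V) : Prop :=
  ∀ I : Set V, IsInterval G I → I = ∅ ∨ I = Set.univ ∨ ∃ x, I = {x}

def Decomposable (G : SimpleGraph V) : Prop := ¬ Indecomposable G

/-- The path graph on `Fin n`; the vertex `(i : Fin n)` represents the
paper's vertex `i+1`, so edges join consecutive indices. -/
def P (n : ℕ) : SimpleGraph (Fin n) :=
  SimpleGraph.fromRel (fun i j => (i : ℕ) + 1 = (j : ℕ))

/-- The graph `Q_n` on `Fin n` (index `i` represents the paper's vertex `i+1`):
the path on indices `0..n-3` together with the hub index `n-2` (vertex `n-1`)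
joined to every index except `n-2` and `n-3`. -/
def Q (n : ℕ) : SimpleGraph (Fin n) :=
  SimpleGraph.fromRel (fun i j =>
    ((i : ℕ) + 1 = (j : ℕ) ∧ (j : ℕ) ≤ n - 3) ∨
    ((i : ℕ) = n - 2 ∧ (j : ℕ) ≠ n - 2 ∧ (j : ℕ) ≠ n - 3))

/-- `Ext(X)`. -/
def ExtSet (G : SimpleGraph V) (X : Set V) : Set V :=
  {v | v ∉ X ∧ Indecomposable (G.induce (X ∪ {v}))}

/-- `⟨X⟩`. -/
def AngleSet (G : SimpleGraph V) (X : Set V) : Set V :=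
  {v | v ∉ X ∧ ((∀ x ∈ X, G.Adj v x) ∨ (∀ x ∈ X, ¬ G.Adj v x))}

/-- `X(u)`: vertices `v ∉ X` such that `{u,v}` is an interval of `G[X ∪ {v}]`. -/
def XSet (G : SimpleGraph V) (X : Set V) (u : V) : Set V :=
  {v | v ∉ X ∧ IsInterval (G.induce (X ∪ {v})) (Subtype.val ⁻¹' {u, v})}

/-- `G` is `{a,b}`-minimal. -/
def IsMinimal (G : SimpleGraph V) (a b : V) : Prop :=
  Indecomposable G ∧
    ∀ X : Set V, X ⊂ Set.univ → a ∈ X → b ∈ X → 3 ≤ X.ncard →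
      Decomposable (G.induce X)

theorem IsInterval.mem_of_adj_of_not_adj {G : SimpleGraph V} {I : Set V}
    (hI : IsInterval G I) {a b x : V} (ha : a ∈ I) (hb : b ∈ I) (hax : G.Adj a x)
    (hbx : ¬ G.Adj b x) : x ∈ I := by
  by_contra hx
  exact hbx ((hI x hx a ha b hb).1 hax)

def QAdj (n i j : ℕ) : Prop :=
  i ≠ j ∧ (((i + 1 = j ∧ j ≤ n - 3) ∨ (i = n - 2 ∧ j ≠ n - 2 ∧ j ≠ n - 3)) ∨
    ((j + 1 = i ∧ i ≤ n - 3) ∨ (j = n - 2 ∧ i ≠ n - 2 ∧ i ≠ n - 3)))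

theorem Q_adj_iff {n : ℕ} (a b : Fin n) : (Q n).Adj a b ↔ QAdj n a b := by
  simp only [Q, fromRel_adj, QAdj, ne_eq, Fin.ext_iff]

namespace IsInterval

variable {n : ℕ} {I : Set (Fin n)}

theorem Q_val_mem (hI : IsInterval (Q n) I) {a b x : ℕ} (ha : a ∈ Fin.val '' I)
    (hb : b ∈ Fin.val '' I) (hx : x < n) (hax : QAdj n a x) (hbx : ¬ QAdj n b x) :
    x ∈ Fin.val '' I := by
  obtain ⟨a, ha, rfl⟩ := ha
  obtain ⟨b, hb, rfl⟩ := hb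
  rw [← Q_adj_iff a ⟨x, hx⟩] at hax
  rw [← Q_adj_iff b ⟨x, hx⟩] at hbx
  exact ⟨_, hI.mem_of_adj_of_not_adj ha hb hax hbx, rfl⟩

theorem Q_hub_mem_of_path_mem (hI : IsInterval (Q n) I) {i j : ℕ} (hij : i < j)
    (hj : j ≤ n - 3) (hi : i ∈ Fin.val '' I) (hjI : j ∈ Fin.val '' I) :
    n - 2 ∈ Fin.val '' I := by
  induction hk : n - 3 - j generalizing j with
  | zero =>
    exact hI.Q_val_mem hi hjI (by omega) (by unfold QAdj; omega) (by unfold QAdj; omega)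
  | succ k ih =>
    have hsucc : j + 1 ∈ Fin.val '' I :=
      hI.Q_val_mem hjI hi (by omega) (by unfold QAdj; omega) (by unfold QAdj; omega)
    exact ih (by omega) (by omega) hsucc (by omega)

theorem Q_hub_mem (hI : IsInterval (Q n) I) (hn : 4 ≤ n) {a b : ℕ} (hab : a < b)
    (ha : a ∈ Fin.val '' I) (hb : b ∈ Fin.val '' I) : n - 2 ∈ Fin.val '' I := by
  have hbn : b < n := by
    obtain ⟨b, -, rfl⟩ := hb
    exact b.isLt
  obtain hb_path | rfl | rfl : b ≤ n - 3 ∨ b = n - 2 ∨ b = n - 1 := by omega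
  · exact hI.Q_hub_mem_of_path_mem hab hb_path ha hb
  · exact hb
  obtain rfl | ha_path : a = n - 2 ∨ a ≤ n - 3 := by omega
  · exact ha
  -- a path neighbour of `a` is separated from `a` by the pendant vertex
  obtain rfl | ha_pos := Nat.eq_zero_or_pos a
  · have h1 : 1 ∈ Fin.val '' I :=
      hI.Q_val_mem ha hb (by omega) (by unfold QAdj; omega) (by unfold QAdj; omega)
    exact hI.Q_hub_mem_of_path_mem zero_lt_one (by omega) ha h1
  · have hpred : a - 1 ∈ Fin.val '' I :=
      hI.Q_val_mem ha hb (by omega) (by unfold QAdj; omega) (by unfold QAdj; omega)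
    exact hI.Q_hub_mem_of_path_mem (by omega) ha_path hpred ha

theorem Q_pendant_mem (hI : IsInterval (Q n) I) (hhub : n - 2 ∈ Fin.val '' I) {v : ℕ}
    (hv : v ∈ Fin.val '' I) (hv_hub : v ≠ n - 2) : n - 1 ∈ Fin.val '' I := by
  have hvn : v < n := by
    obtain ⟨v, -, rfl⟩ := hv
    exact v.isLt
  obtain rfl | hv_pendant := eq_or_ne v (n - 1)
  · exact hv
  exact hI.Q_val_mem hhub hv (by omega) (by unfold QAdj; omega) (by unfold QAdj; omega)

theorem Q_eq_univ (hI : IsInterval (Q n) I) (hn : 4 ≤ n) (hhub : n - 2 ∈ Fin.val '' I)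
    (hpendant : n - 1 ∈ Fin.val '' I) : I = Set.univ := by
  have hlow : ∀ k < n - 3, k ∈ Fin.val '' I := fun k hk =>
    hI.Q_val_mem hhub hpendant (by omega) (by unfold QAdj; omega) (by unfold QAdj; omega)
  have hlast : n - 3 ∈ Fin.val '' I :=
    hI.Q_val_mem (hlow (n - 4) (by omega)) hpendant (by omega) (by unfold QAdj; omega)
      (by unfold QAdj; omega)
  refine Set.eq_univ_of_forall fun v => Fin.val_injective.mem_set_image.1 ?_
  obtain hv | hv | hv | hv : v < n - 3 ∨ v = n - 3 ∨ v = n - 2 ∨ v = n - 1 := by omega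
  · exact hlow v hv
  all_goals rw [hv]; assumption

end IsInterval

theorem Q_indecomposable (n : ℕ) (hn : 4 ≤ n) :
    Indecomposable (Q n) := by
  intro I hI
  obtain hsub | hnt := I.subsingleton_or_nontrivial
  · obtain h | h := hsub.eq_empty_or_singleton
    exacts [Or.inl h, Or.inr (Or.inr h)]
  have hS := hnt.image Fin.val_injective
  obtain ⟨a, ha, b, hb, hab⟩ := hS.exists_lt
  have hhub := hI.Q_hub_mem hn hab ha hb
  obtain ⟨v, hv, hv_hub⟩ := hS.exists_ne (n - 2)
  exact Or.inr (Or.inl (hI.Q_eq_univ hn hhub (hI.Q_pendant_mem hhub hv hv_hub)))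
end

section
/- For every n ≥ 4, the path P_n is {1,n}-minimal: it is indecomposable, and for every proper subset X of {1,…,n} with {1,n} ⊆ X and |X| ≥ 3, the induced subgraph P_n[X] is decomposable. -/
open SimpleGraph

variable {V : Type*}

/-
A path is indecomposable because it is connected: a proper interval with two vertices has an
outside neighbour, hence lies in the two-element neighbourhood `{x - 1, x + 1}` of some `x`,
and a vertex at distance two from `x` (which exists once `n ≥ 4`) tells `x - 1` and `x + 1`
apart. Conversely, a vertex `g` missing from `X` with `0 < g < n - 1` disconnects `P_n[X]` into
the nonempty parts below and above `g`; both are intervals, and with `|X| ≥ 3` one of them is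
nontrivial.
-/

open Set

section Intervals

variable {G : SimpleGraph V} {I : Set V}

theorem indecomposable_iff :
    Indecomposable G ↔ ∀ I, IsInterval G I → I.Nontrivial → I = univ := by
  refine ⟨fun hG I hI hnt => ?_, fun h I hI => ?_⟩
  · rcases hG I hI with h | h | ⟨x, rfl⟩
    · exact absurd h hnt.nonempty.ne_empty
    · exact h
    · exact absurd hnt not_nontrivial_singleton
  · rcases I.eq_empty_or_nonempty with h0 | hne
    · exact Or.inl h0
    rcases hne.exists_eq_singleton_or_nontrivial with hx | hnt
    · exact Or.inr (Or.inr hx)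
    · exact Or.inr (Or.inl (h I hI hnt))

theorem Indecomposable.subsingleton_of_isInterval (hG : Indecomposable G) (hI : IsInterval G I)
    (hIc : Iᶜ.Nonempty) : I.Subsingleton :=
  not_nontrivial_iff.mp fun hnt =>
    hIc.ne_empty (compl_empty_iff.mpr (indecomposable_iff.mp hG I hI hnt))

theorem isInterval_of_forall_not_adj (h : ∀ a ∈ I, ∀ x ∉ I, ¬ G.Adj a x) :
    IsInterval G I :=
  fun x hx a ha b hb => iff_of_false (h a ha x hx) (h b hb x hx)

theorem decomposable_of_forall_not_adj (h : ∀ a ∈ I, ∀ x ∉ I, ¬ G.Adj a x)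
    (hI : I.Nonempty) (hIc : Iᶜ.Nonempty) (hV : 3 ≤ Nat.card V) : Decomposable G := by
  intro hG
  have hIc_int : IsInterval G Iᶜ := isInterval_of_forall_not_adj fun a ha x hx hax =>
    h x (not_not.mp hx) a ha hax.symm
  obtain ⟨a, ha⟩ := hI
  obtain ⟨b, hb⟩ := hIc
  have hIa : I = {a} := (hG.subsingleton_of_isInterval (isInterval_of_forall_not_adj h)
    ⟨b, hb⟩).eq_singleton_of_mem ha
  have hIb : Iᶜ = {b} :=
    (hG.subsingleton_of_isInterval hIc_int ⟨a, not_not.mpr ha⟩).eq_singleton_of_mem hb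
  have huniv : (univ : Set V) = {a, b} := by
    rw [← union_compl_self I, hIb, hIa]
    rfl
  have : Nat.card V ≤ 2 := by
    rw [← ncard_univ, huniv]
    exact (ncard_insert_le _ _).trans (by simp)
  omega

theorem IsInterval.exists_forall_adj (hG : G.Preconnected) (hI : IsInterval G I) {a b : V}
    (ha : a ∈ I) (hb : b ∉ I) : ∃ x ∉ I, ∀ y ∈ I, G.Adj y x := by
  obtain ⟨d, -, hd, hd'⟩ := (hG a b).some.exists_boundary_dart I ha hb
  exact ⟨d.snd, hd', fun y hy => (hI _ hd' _ hd _ hy).mp d.adj⟩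

end Intervals

section Path

variable {n : ℕ}

theorem P_eq_pathGraph : P n = pathGraph n := by
  ext u v
  simp only [P, fromRel_adj, pathGraph_adj]
  constructor
  · exact And.right
  · exact fun h => ⟨fun huv => by subst huv; omega, h⟩

theorem P_adj {u v : Fin n} : (P n).Adj u v ↔ (u : ℕ) + 1 = v ∨ (v : ℕ) + 1 = u := by
  rw [P_eq_pathGraph, pathGraph_adj]

theorem indecomposable_P (hn : 4 ≤ n) : Indecomposable (P n) := by
  refine indecomposable_iff.mpr fun I hI ⟨a, ha, b, hb, hab⟩ => ?_
  by_contra hne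
  obtain ⟨c, hc⟩ := (ne_univ_iff_exists_notMem I).mp hne
  obtain ⟨x, -, hx⟩ := hI.exists_forall_adj (P_eq_pathGraph ▸ pathGraph_preconnected n) ha hc
  have hab' : (a : ℕ) ≠ b := Fin.val_injective.ne hab
  have hxa := P_adj.mp (hx a ha)
  have hxb := P_adj.mp (hx b hb)
  -- `{a, b} = {x - 1, x + 1}`, and `y` is adjacent to exactly one of them
  obtain ⟨y, hy⟩ : ∃ y : Fin n, (y : ℕ) = x + 2 ∨ (y : ℕ) + 2 = x := by
    by_cases h : (x : ℕ) + 2 < n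
    · exact ⟨⟨x + 2, h⟩, Or.inl rfl⟩
    · exact ⟨⟨x - 2, by omega⟩, Or.inr (by simp only; omega)⟩
  have hyI : y ∉ I := fun hyI => by have := P_adj.mp (hx y hyI); omega
  have := hI y hyI a ha b hb
  simp only [P_adj] at this
  omega

theorem decomposable_induce_P {X : Set (Fin n)} {g a b : Fin n} (hg : g ∉ X) (ha : a ∈ X)
    (hb : b ∈ X) (hag : a < g) (hgb : g < b) (hX : 3 ≤ X.ncard) :
    Decomposable ((P n).induce X) := by
  have hne : ∀ v : X, (v : Fin n) ≠ g := fun v hv => hg (hv ▸ v.2)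
  refine decomposable_of_forall_not_adj (I := {v : X | (v : Fin n) < g}) ?_ ⟨⟨a, ha⟩, hag⟩
    ⟨⟨b, hb⟩, not_lt.mpr hgb.le⟩ (by rwa [Nat.card_coe_set_eq])
  intro u hu v hv huv
  have hvg := lt_of_le_of_ne (not_lt.mp hv) (hne v).symm
  rw [comap_adj, Function.Embedding.coe_subtype, P_adj] at huv
  have hu : (u : ℕ) < g := hu
  rw [Fin.lt_def] at hvg
  omega

end Path

theorem path_minimal (n : ℕ) (hn : 4 ≤ n) :
    IsMinimal (P n) (⟨0, by omega⟩ : Fin n) (⟨n - 1, by omega⟩ : Fin n) := by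
  refine ⟨indecomposable_P hn, fun X hX h0 hlast hcard => ?_⟩
  obtain ⟨g, -, hg⟩ := exists_of_ssubset hX
  have hg0 : (g : ℕ) ≠ 0 := fun h => hg (by rwa [show g = ⟨0, by omega⟩ from Fin.ext h])
  have hglast : (g : ℕ) ≠ n - 1 := fun h =>
    hg (by rwa [show g = ⟨n - 1, by omega⟩ from Fin.ext h])
  exact decomposable_induce_P hg h0 hlast (Fin.lt_def.mpr (by simp only; omega))
    (Fin.lt_def.mpr (by simp only; omega)) hcard
end

section
/- For every n ≥ 8, the indecomposability graph of Q_n has edge set exactly { {1,2}, {2,n}, {n−1,n}, {1,n} }. -/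
/-!
Index the vertices of `Q_n` by `0, …, n - 1`: a path `0 – 1 – ⋯ – (n - 3)`, a hub `n - 2`
adjacent to `0, …, n - 4`, and a pendant vertex `n - 1` hanging from the hub.

An interval containing `a` and `b` contains every vertex adjacent to exactly one of them.
Along an induced path of at least four vertices this forces an interval with two path vertices
to contain the whole path, and then the hub and the pendant vertex; for the four listed
deletions every pair of remaining vertices leads to two path vertices, so the rest is
indecomposable. Every other deletion leaves an explicit nontrivial interval: the vertices other
than an isolated `n - 1`, a twin of the pendant vertex, or a path segment cut off by a deleted
vertex, which from outside only the hub sees.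
-/

open SimpleGraph

variable {V : Type*}

theorem IsInterval.preimage {W : Type*} {G : SimpleGraph V} {H : SimpleGraph W} (f : G ↪g H)
    {I : Set W} (hI : IsInterval H I) : IsInterval G (f ⁻¹' I) := fun x hx a ha b hb => by
  simpa only [f.map_adj_iff] using hI (f x) hx (f a) ha (f b) hb

theorem Indecomposable.of_iso {W : Type*} {G : SimpleGraph V} {H : SimpleGraph W} (e : G ≃g H)
    (hH : Indecomposable H) : Indecomposable G := by
  intro I hI
  have hI' : I = e ⁻¹' (e.symm ⁻¹' I) := by ext; simp
  have hJ : IsInterval H (e.symm ⁻¹' I) := hI.preimage e.symm.toEmbedding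
  rcases hH _ hJ with h | h | ⟨w, h⟩ <;> rw [hI', h]
  · exact Or.inl rfl
  · exact Or.inr (Or.inl rfl)
  · exact Or.inr (Or.inr ⟨e.symm w, by ext; simp [e.eq_symm_apply]⟩)

theorem SimpleGraph.Iso.indecomposable_iff {W : Type*} {G : SimpleGraph V} {H : SimpleGraph W}
    (e : G ≃g H) : Indecomposable G ↔ Indecomposable H :=
  ⟨.of_iso e.symm, .of_iso e⟩

noncomputable def SimpleGraph.induceComapIso {W : Type*} {f : W → V} (hf : Function.Injective f)
    (G : SimpleGraph V) (S : Set W) : (G.comap f).induce S ≃g G.induce (f '' S) where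
  toEquiv := Equiv.Set.image f S hf
  map_rel_iff' := Iff.rfl

/-- An interval of the induced subgraph `G[S]`, stated for subsets of `V` rather than of `S`. -/
def IsIntervalIn (G : SimpleGraph V) (S J : Set V) : Prop :=
  ∀ x ∈ S, x ∉ J → ∀ a ∈ J, ∀ b ∈ J, (G.Adj a x ↔ G.Adj b x)

section IsIntervalIn

variable {G : SimpleGraph V} {S J : Set V}

theorem IsIntervalIn.mem_of_adj_of_not_adj (hJ : IsIntervalIn G S J) {a b c : V} (ha : a ∈ J)
    (hb : b ∈ J) (hc : c ∈ S) (hac : G.Adj a c) (hbc : ¬ G.Adj b c) : c ∈ J := by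
  by_contra hcJ
  exact hbc ((hJ c hc hcJ a ha b hb).mp hac)

theorem IsIntervalIn.not_indecomposable_induce (hJ : IsIntervalIn G S J) (hJS : J ⊆ S)
    {u v w : V} (hu : u ∈ J) (hv : v ∈ J) (huv : u ≠ v) (hw : w ∈ S) (hwJ : w ∉ J) :
    ¬ Indecomposable (G.induce S) := by
  intro hind
  have hI : IsInterval (G.induce S) (Subtype.val ⁻¹' J) := fun x hx a ha b hb =>
    hJ x x.2 hx a ha b hb
  have hu' : (⟨u, hJS hu⟩ : S) ∈ Subtype.val ⁻¹' J := hu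
  have hv' : (⟨v, hJS hv⟩ : S) ∈ Subtype.val ⁻¹' J := hv
  rcases hind _ hI with h | h | ⟨x, h⟩ <;> rw [h] at hu' hv'
  · exact hu'
  · exact hwJ (h ▸ Set.mem_univ (⟨w, hw⟩ : S) : (⟨w, hw⟩ : S) ∈ Subtype.val ⁻¹' J)
  · exact huv (congrArg Subtype.val (hu'.trans hv'.symm))

theorem indecomposable_induce_of_forall_isIntervalIn
    (h : ∀ J ⊆ S, IsIntervalIn G S J → ∀ a ∈ J, ∀ b ∈ J, a ≠ b → S ⊆ J) :
    Indecomposable (G.induce S) := by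
  intro I hI
  rcases I.subsingleton_or_nontrivial with hs | ⟨a, ha, b, hb, hab⟩
  · exact hs.eq_empty_or_singleton.imp_right Or.inr
  have hJ : IsIntervalIn G S (Subtype.val '' I) := by
    rintro x hx hxI _ ⟨a, ha, rfl⟩ _ ⟨b, hb, rfl⟩
    exact hI ⟨x, hx⟩ (fun h => hxI ⟨_, h, rfl⟩) a ha b hb
  have hSI := h _ (Subtype.coe_image_subset S I) hJ a ⟨a, ha, rfl⟩ b ⟨b, hb, rfl⟩
    (Subtype.val_injective.ne hab)
  refine Or.inr (Or.inl (Set.eq_univ_of_forall fun v => ?_))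
  obtain ⟨w, hw, hwv⟩ := hSI v.2
  exact Subtype.ext hwv ▸ hw

end IsIntervalIn

def IsInducedPathOn (G : SimpleGraph ℕ) (lo hi : ℕ) : Prop :=
  ∀ i ∈ Set.Icc lo hi, ∀ j ∈ Set.Icc lo hi, G.Adj i j ↔ i + 1 = j ∨ j + 1 = i

section IsInducedPathOn

variable {G : SimpleGraph ℕ} {S J : Set ℕ} {lo hi : ℕ}

theorem IsIntervalIn.mem_of_isInducedPathOn (hJ : IsIntervalIn G S J) (hS : Set.Icc lo hi ⊆ S)
    (hpath : IsInducedPathOn G lo hi) {a b c : ℕ} (ha : a ∈ J) (hb : b ∈ J)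
    (ha' : a ∈ Set.Icc lo hi) (hb' : b ∈ Set.Icc lo hi) (hc : c ∈ Set.Icc lo hi)
    (hac : a + 1 = c ∨ c + 1 = a) (hbc : ¬ (b + 1 = c ∨ c + 1 = b)) : c ∈ J :=
  hJ.mem_of_adj_of_not_adj ha hb (hS hc) ((hpath a ha' c hc).mpr hac)
    (fun h => hbc ((hpath b hb' c hc).mp h))

theorem IsIntervalIn.Icc_subset_of_mem_of_succ_mem (hJ : IsIntervalIn G S J)
    (hS : Set.Icc lo hi ⊆ S) (hpath : IsInducedPathOn G lo hi) {j : ℕ} (hlo : lo ≤ j)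
    (hhi : j + 1 ≤ hi) (hj : j ∈ J) (hj' : j + 1 ∈ J) : Set.Icc lo hi ⊆ J := by
  have up : ∀ d, j + 1 + d ≤ hi → j + d ∈ J ∧ j + 1 + d ∈ J := by
    intro d
    induction d with
    | zero => exact fun _ => ⟨hj, hj'⟩
    | succ d ih =>
      intro hd
      obtain ⟨h₀, h₁⟩ := ih (by omega)
      refine ⟨by convert h₁ using 1; omega, ?_⟩
      exact hJ.mem_of_isInducedPathOn hS hpath h₁ h₀ ⟨by omega, by omega⟩ ⟨by omega, by omega⟩
        ⟨by omega, hd⟩ (by omega) (by omega)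
  have down : ∀ d, lo + d ≤ j → j - d ∈ J ∧ j - d + 1 ∈ J := by
    intro d
    induction d with
    | zero => exact fun _ => ⟨hj, hj'⟩
    | succ d ih =>
      intro hd
      obtain ⟨h₀, h₁⟩ := ih (by omega)
      refine ⟨?_, by convert h₀ using 1; omega⟩
      exact hJ.mem_of_isInducedPathOn hS hpath h₀ h₁ ⟨by omega, by omega⟩ ⟨by omega, by omega⟩
        ⟨by omega, by omega⟩ (by omega) (by omega)
  rintro k ⟨hk, hk'⟩
  rcases le_or_gt k j with hkj | hkj
  · simpa [Nat.sub_sub_self hkj] using (down (j - k) (by omega)).1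
  · simpa [Nat.add_sub_cancel' (Nat.succ_le_of_lt hkj)] using (up (k - (j + 1)) (by omega)).2

theorem IsIntervalIn.Icc_subset (hJ : IsIntervalIn G S J) (hS : Set.Icc lo hi ⊆ S)
    (hpath : IsInducedPathOn G lo hi) (hlen : lo + 3 ≤ hi) {a b : ℕ} (ha : a ∈ J) (hb : b ∈ J)
    (hab : a ≠ b) (ha' : a ∈ Set.Icc lo hi) (hb' : b ∈ Set.Icc lo hi) : Set.Icc lo hi ⊆ J := by
  wlog hlt : a < b generalizing a b
  · exact this hb ha hab.symm hb' ha' (by omega)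
  obtain ⟨ha₁, ha₂⟩ := ha'
  obtain ⟨hb₁, hb₂⟩ := hb'
  rcases (by omega : b = a + 1 ∨ b = a + 2 ∨ a + 3 ≤ b) with rfl | rfl | hfar
  · exact hJ.Icc_subset_of_mem_of_succ_mem hS hpath ha₁ hb₂ ha hb
  · -- `a` and `a + 2` have the same neighbour `a + 1`; a neighbour on the outer side separates them
    by_cases hlo : lo < a
    · obtain ⟨c, rfl⟩ : ∃ c, a = c + 1 := ⟨a - 1, by omega⟩
      have hc : c ∈ J := hJ.mem_of_isInducedPathOn hS hpath ha hb ⟨ha₁, ha₂⟩ ⟨hb₁, hb₂⟩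
        ⟨by omega, by omega⟩ (by omega) (by omega)
      exact hJ.Icc_subset_of_mem_of_succ_mem hS hpath (by omega) ha₂ hc ha
    · have h₃ : a + 3 ∈ J := hJ.mem_of_isInducedPathOn hS hpath hb ha ⟨hb₁, hb₂⟩ ⟨ha₁, ha₂⟩
        ⟨by omega, by omega⟩ (by omega) (by omega)
      exact hJ.Icc_subset_of_mem_of_succ_mem hS hpath hb₁ (by omega) hb h₃
  · have h₁ : a + 1 ∈ J := hJ.mem_of_isInducedPathOn hS hpath ha hb ⟨ha₁, ha₂⟩ ⟨hb₁, hb₂⟩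
      ⟨by omega, by omega⟩ (by omega) (by omega)
    exact hJ.Icc_subset_of_mem_of_succ_mem hS hpath ha₁ (by omega) ha h₁

end IsInducedPathOn

/-- `Q n` with vertices in `ℕ`, where arithmetic on vertices does not wrap around. -/
def qGraph (n : ℕ) : SimpleGraph ℕ :=
  SimpleGraph.fromRel fun i j => (i + 1 = j ∧ j ≤ n - 3) ∨ (i = n - 2 ∧ j ≠ n - 2 ∧ j ≠ n - 3)

theorem qGraph_adj {n i j : ℕ} : (qGraph n).Adj i j ↔ i ≠ j ∧
    ((i + 1 = j ∧ j ≤ n - 3) ∨ (i = n - 2 ∧ j ≠ n - 2 ∧ j ≠ n - 3) ∨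
      (j + 1 = i ∧ i ≤ n - 3) ∨ (j = n - 2 ∧ i ≠ n - 2 ∧ i ≠ n - 3)) := by
  simp only [qGraph, fromRel_adj]
  tauto

theorem Q_eq_comap_qGraph (n : ℕ) : Q n = (qGraph n).comap Fin.val := by
  ext i j
  simp only [Q, comap_adj, fromRel_adj, qGraph, ne_eq, Fin.val_inj]

theorem Fin.image_val_compl_pair {n : ℕ} (x y : Fin n) :
    Fin.val '' ({x, y} : Set (Fin n))ᶜ = {k | k < n ∧ k ≠ x ∧ k ≠ y} := by
  ext k
  constructor
  · rintro ⟨k, hk, rfl⟩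
    simp only [Set.mem_compl_iff, Set.mem_insert_iff, Set.mem_singleton_iff, not_or] at hk
    exact ⟨k.isLt, Fin.val_ne_of_ne hk.1, Fin.val_ne_of_ne hk.2⟩
  · rintro ⟨hk, hx, hy⟩
    exact ⟨⟨k, hk⟩, by simp [Fin.ext_iff, hx, hy], rfl⟩

theorem qGraph_isInducedPathOn {n lo hi : ℕ} (hhi : hi ≤ n - 3) :
    IsInducedPathOn (qGraph n) lo hi := fun i hi j hj => by
  rw [qGraph_adj, Set.mem_Icc] at *
  omega

theorem indecomposable_qGraph_induce_Icc_zero {n : ℕ} (hn : 6 ≤ n) :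
    Indecomposable ((qGraph n).induce (Set.Icc 0 (n - 3))) :=
  indecomposable_induce_of_forall_isIntervalIn fun _ hJS hJ _ ha _ hb hab =>
    hJ.Icc_subset subset_rfl (qGraph_isInducedPathOn le_rfl) (by omega) ha hb hab
      (hJS ha) (hJS hb)

theorem indecomposable_qGraph_induce_Icc_one {n : ℕ} (hn : 8 ≤ n) :
    Indecomposable ((qGraph n).induce (Set.Icc 1 (n - 2))) := by
  refine indecomposable_induce_of_forall_isIntervalIn fun J hJS hJ a ha b hb hab => ?_
  have hS : ∀ k, k ∈ Set.Icc 1 (n - 2) ↔ k ∈ Set.Icc 1 (n - 3) ∨ k = n - 2 := by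
    intro k; simp only [Set.mem_Icc]; omega
  have hsub : Set.Icc 1 (n - 3) ⊆ Set.Icc 1 (n - 2) := Set.Icc_subset_Icc_right (by omega)
  have hadj : IsInducedPathOn (qGraph n) 1 (n - 3) := qGraph_isInducedPathOn le_rfl
  have hpair : ∀ c ∈ J, ∀ d ∈ J, c ≠ d → c ∈ Set.Icc 1 (n - 3) → Set.Icc 1 (n - 3) ⊆ J := by
    intro c hc d hd hcd hc'
    rcases (hS d).mp (hJS hd) with hd' | rfl
    · exact hJ.Icc_subset hsub hadj (by omega) hc hd hcd hc' hd'
    -- the hub sees every path vertex up to `n - 4`, and `c` sees at most three of them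
    obtain ⟨hc₁, hc₃⟩ := hc'
    obtain ⟨e, he₁, he₄, hce⟩ : ∃ e, 1 ≤ e ∧ e ≤ n - 4 ∧ (e + 2 ≤ c ∨ c + 2 ≤ e) := by
      by_cases h : c ≤ 2
      exacts [⟨4, by omega, by omega, by omega⟩, ⟨1, le_rfl, by omega, by omega⟩]
    have heJ : e ∈ J := hJ.mem_of_adj_of_not_adj hd hc ⟨he₁, by omega⟩
      (by rw [qGraph_adj]; omega) (by rw [qGraph_adj]; omega)
    exact hJ.Icc_subset hsub hadj (by omega) hc heJ (by omega) ⟨hc₁, hc₃⟩ ⟨he₁, by omega⟩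
  have hpathJ : Set.Icc 1 (n - 3) ⊆ J := by
    rcases (hS a).mp (hJS ha) with ha' | rfl
    · exact hpair a ha b hb hab ha'
    rcases (hS b).mp (hJS hb) with hb' | rfl
    · exact hpair b hb _ ha hab.symm hb'
    · exact absurd rfl hab
  have hhub : n - 2 ∈ J := hJ.mem_of_adj_of_not_adj (hpathJ ⟨le_rfl, by omega⟩)
    (hpathJ ⟨by omega, le_rfl⟩) ((hS _).mpr (Or.inr rfl)) (by rw [qGraph_adj]; omega)
    (by rw [qGraph_adj]; omega)
  intro k hk
  rcases (hS k).mp hk with hk' | rfl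
  exacts [hpathJ hk', hhub]

theorem indecomposable_qGraph_induce_insert_Icc_two {n p : ℕ} (hn : 8 ≤ n)
    (hp : p = 0 ∨ p = n - 1) :
    Indecomposable ((qGraph n).induce (insert p (Set.Icc 2 (n - 2)))) := by
  refine indecomposable_induce_of_forall_isIntervalIn fun J hJS hJ a ha b hb hab => ?_
  have hS : ∀ k, k ∈ insert p (Set.Icc 2 (n - 2)) ↔
      k ∈ Set.Icc 2 (n - 3) ∨ k = n - 2 ∨ k = p := by
    intro k; simp only [Set.mem_insert_iff, Set.mem_Icc]; omega
  have hsub : Set.Icc 2 (n - 3) ⊆ insert p (Set.Icc 2 (n - 2)) := fun k hk =>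
    (hS k).mpr (Or.inl hk)
  have hadj : IsInducedPathOn (qGraph n) 2 (n - 3) := qGraph_isInducedPathOn le_rfl
  have hpend : p ∈ J → ∀ c ∈ J, c ∈ Set.Icc 2 (n - 3) → Set.Icc 2 (n - 3) ⊆ J := by
    rintro hpJ c hc ⟨hc₂, hc₃⟩
    obtain ⟨e, he₂, he₃, hce⟩ : ∃ e, 2 ≤ e ∧ e ≤ n - 3 ∧ (c + 1 = e ∨ e + 1 = c) := by
      by_cases h : c < n - 3
      exacts [⟨c + 1, by omega, by omega, by omega⟩, ⟨c - 1, by omega, by omega, by omega⟩]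
    have heJ : e ∈ J := hJ.mem_of_adj_of_not_adj hc hpJ (hsub ⟨he₂, he₃⟩)
      (by rw [qGraph_adj]; omega) (by rw [qGraph_adj]; omega)
    exact hJ.Icc_subset hsub hadj (by omega) hc heJ (by omega) ⟨hc₂, hc₃⟩ ⟨he₂, he₃⟩
  have hpair : ∀ c ∈ J, ∀ d ∈ J, c ≠ d → c ∈ Set.Icc 2 (n - 3) → Set.Icc 2 (n - 3) ⊆ J := by
    intro c hc d hd hcd hc'
    rcases (hS d).mp (hJS hd) with hd' | rfl | rfl
    · exact hJ.Icc_subset hsub hadj (by omega) hc hd hcd hc' hd'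
    · exact hpend (hJ.mem_of_adj_of_not_adj hd hc ((hS p).mpr (Or.inr (Or.inr rfl)))
        (by rw [qGraph_adj]; omega) (by rw [qGraph_adj, Set.mem_Icc] at *; omega)) c hc hc'
    · exact hpend hd c hc hc'
  have hpathJ : Set.Icc 2 (n - 3) ⊆ J := by
    by_cases ha' : a ∈ Set.Icc 2 (n - 3)
    · exact hpair a ha b hb hab ha'
    by_cases hb' : b ∈ Set.Icc 2 (n - 3)
    · exact hpair b hb a ha hab.symm hb'
    obtain ⟨hhubJ, hpJ⟩ : n - 2 ∈ J ∧ p ∈ J := by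
      rcases (hS a).mp (hJS ha) with h | rfl | rfl <;>
        rcases (hS b).mp (hJS hb) with h' | rfl | rfl
      all_goals first | contradiction | exact ⟨ha, hb⟩ | exact ⟨hb, ha⟩
    exact hpend hpJ 2 (hJ.mem_of_adj_of_not_adj hhubJ hpJ (hsub ⟨le_rfl, by omega⟩)
      (by rw [qGraph_adj]; omega) (by rw [qGraph_adj]; omega)) ⟨le_rfl, by omega⟩
  have hhub : n - 2 ∈ J := hJ.mem_of_adj_of_not_adj (hpathJ ⟨le_rfl, by omega⟩)
    (hpathJ ⟨by omega, le_rfl⟩) ((hS _).mpr (Or.inr (Or.inl rfl))) (by rw [qGraph_adj]; omega)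
    (by rw [qGraph_adj]; omega)
  have hpJ : p ∈ J := hJ.mem_of_adj_of_not_adj hhub (hpathJ ⟨le_rfl, by omega⟩)
    ((hS _).mpr (Or.inr (Or.inr rfl))) (by rw [qGraph_adj]; omega) (by rw [qGraph_adj]; omega)
  intro k hk
  rcases (hS k).mp hk with hk' | rfl | rfl
  exacts [hpathJ hk', hhub, hpJ]

theorem not_indecomposable_qGraph_induce {n a b : ℕ} (hn : 8 ≤ n) (hab : a < b) (hb : b < n)
    (hgood : ¬ ((a = 0 ∧ b = 1) ∨ (a = 1 ∧ b = n - 1) ∨ (a = n - 2 ∧ b = n - 1) ∨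
      (a = 0 ∧ b = n - 1))) :
    ¬ Indecomposable ((qGraph n).induce {k | k < n ∧ k ≠ a ∧ k ≠ b}) := by
  suffices ∃ (P : ℕ → Prop) (u v w : ℕ), (∀ k, P k → k < n ∧ k ≠ a ∧ k ≠ b) ∧
      (∀ z c d, z < n → z ≠ a → z ≠ b → ¬ P z → P c → P d →
        ((qGraph n).Adj c z ↔ (qGraph n).Adj d z)) ∧
      P u ∧ P v ∧ u ≠ v ∧ w < n ∧ w ≠ a ∧ w ≠ b ∧ ¬ P w by
    obtain ⟨P, u, v, w, hPS, hP, hu, hv, huv, hw, hwa, hwb, hwP⟩ := this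
    exact IsIntervalIn.not_indecomposable_induce (J := {k | P k})
      (fun z hz hzP c hc d hd => hP z c d hz.1 hz.2.1 hz.2.2 hzP hc hd) hPS hu hv huv
      ⟨hw, hwa, hwb⟩ hwP
  simp only [qGraph_adj]
  rcases (by omega : (a ≤ 1 ∧ b = n - 2) ∨ (a = 0 ∧ b = 2) ∨ (a = 1 ∧ b ≤ n - 3) ∨
      (a = 0 ∧ 3 ≤ b ∧ b ≤ n - 3) ∨ (2 ≤ a ∧ a ≤ n - 3 ∧ b ≠ n - 2) ∨ (2 ≤ a ∧ b = n - 2))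
    with h | h | h | h | h | h
  -- Without the hub, `n - 1` is isolated.
  · exact ⟨fun k => k < n - 1 ∧ k ≠ a ∧ k ≠ b, 2, 3, n - 1, fun _ _ => by omega,
      fun _ _ _ _ _ _ _ _ _ => by omega, by omega⟩
  -- `1`, resp. `0`, has become a twin of `n - 1`: both see only the hub.
  · exact ⟨fun k => k = 1 ∨ k = n - 1, 1, n - 1, n - 2, fun _ _ => by omega,
      fun _ _ _ _ _ _ _ _ _ => by omega, by omega⟩
  · exact ⟨fun k => k = 0 ∨ k = n - 1, 0, n - 1, n - 2, fun _ _ => by omega,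
      fun _ _ _ _ _ _ _ _ _ => by omega, by omega⟩
  -- A path segment cut off by a removed vertex is seen from outside only by the hub.
  · exact ⟨fun k => 1 ≤ k ∧ k < b, 1, 2, n - 2, fun _ _ => by omega,
      fun _ _ _ _ _ _ _ _ _ => by omega, by omega⟩
  · exact ⟨fun k => k < a, 0, 1, n - 2, fun _ _ => by omega,
      fun _ _ _ _ _ _ _ _ _ => by omega, by omega⟩
  · exact ⟨fun k => k < a, 0, 1, n - 1, fun _ _ => by omega,
      fun _ _ _ _ _ _ _ _ _ => by omega, by omega⟩

theorem indecomposable_qGraph_induce_iff {n a b : ℕ} (hn : 8 ≤ n) (hab : a < b) (hb : b < n) :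
    Indecomposable ((qGraph n).induce {k | k < n ∧ k ≠ a ∧ k ≠ b}) ↔
      (a = 0 ∧ b = 1) ∨ (a = 1 ∧ b = n - 1) ∨ (a = n - 2 ∧ b = n - 1) ∨ (a = 0 ∧ b = n - 1) := by
  refine ⟨fun h => by_contra fun hgood => not_indecomposable_qGraph_induce hn hab hb hgood h, ?_⟩
  rintro (⟨rfl, rfl⟩ | ⟨rfl, rfl⟩ | ⟨rfl, rfl⟩ | ⟨rfl, rfl⟩)
  · rw [show {k | k < n ∧ k ≠ 0 ∧ k ≠ 1} = insert (n - 1) (Set.Icc 2 (n - 2)) by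
      ext k; simp only [Set.mem_ofPred_eq, Set.mem_insert_iff, Set.mem_Icc]; omega]
    exact indecomposable_qGraph_induce_insert_Icc_two hn (Or.inr rfl)
  · rw [show {k | k < n ∧ k ≠ 1 ∧ k ≠ n - 1} = insert 0 (Set.Icc 2 (n - 2)) by
      ext k; simp only [Set.mem_ofPred_eq, Set.mem_insert_iff, Set.mem_Icc]; omega]
    exact indecomposable_qGraph_induce_insert_Icc_two hn (Or.inl rfl)
  · rw [show {k | k < n ∧ k ≠ n - 2 ∧ k ≠ n - 1} = Set.Icc 0 (n - 3) by
      ext k; simp only [Set.mem_ofPred_eq, Set.mem_Icc]; omega]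
    exact indecomposable_qGraph_induce_Icc_zero (by omega)
  · rw [show {k | k < n ∧ k ≠ 0 ∧ k ≠ n - 1} = Set.Icc 1 (n - 2) by
      ext k; simp only [Set.mem_ofPred_eq, Set.mem_Icc]; omega]
    exact indecomposable_qGraph_induce_Icc_one hn

theorem indec_graph_Q_ge_eight (n : ℕ) (hn : 8 ≤ n) (x y : Fin n) (hxy : x ≠ y) :
    Indecomposable ((Q n).induce (({x, y} : Set (Fin n))ᶜ)) ↔
      (({x, y} : Set (Fin n)) = {⟨0, by omega⟩, ⟨1, by omega⟩} ∨
       ({x, y} : Set (Fin n)) = {⟨1, by omega⟩, ⟨n - 1, by omega⟩} ∨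
       ({x, y} : Set (Fin n)) = {⟨n - 2, by omega⟩, ⟨n - 1, by omega⟩} ∨
       ({x, y} : Set (Fin n)) = {⟨0, by omega⟩, ⟨n - 1, by omega⟩}) := by
  wlog hlt : x < y generalizing x y
  · rw [Set.pair_comm]
    exact this y x hxy.symm (lt_of_le_of_ne (not_lt.mp hlt) hxy.symm)
  rw [Q_eq_comap_qGraph, ((qGraph n).induceComapIso Fin.val_injective _).indecomposable_iff,
    Fin.image_val_compl_pair, indecomposable_qGraph_induce_iff hn hlt y.isLt]
  simp only [Set.pair_eq_pair_iff, Fin.ext_iff]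
  omega
end

section
/- If G is an {a,b}-minimal graph with at least 6 vertices (a ≠ b), then the indecomposability graph I(G) is covered by the vertex set {a,b}: every edge of I(G) contains a or b. -/
open SimpleGraph

variable {V : Type*}

lemma Set.ncard_compl_pair [Finite V] {x y : V} (hxy : x ≠ y) :
    ({x, y}ᶜ : Set V).ncard = Nat.card V - 2 := by
  rw [Set.ncard_compl, Set.ncard_pair hxy]

lemma IsMinimal.decomposable_induce_compl_pair [Fintype V] {G : SimpleGraph V} {a b x y : V}
    (hmin : IsMinimal G a b) (hcard : 5 ≤ Fintype.card V) (hxy : x ≠ y)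
    (ha : a ∉ ({x, y} : Set V)) (hb : b ∉ ({x, y} : Set V)) :
    Decomposable (G.induce ({x, y}ᶜ : Set V)) := by
  refine hmin.2 _ ?_ ha hb ?_
  · exact Set.ssubset_univ_iff.2 (Set.compl_ne_univ.2 (Set.insert_nonempty x {y}))
  · rw [Set.ncard_compl_pair hxy, Nat.card_eq_fintype_card]
    omega

theorem minimal_covered_general {V : Type*} [Fintype V] (G : SimpleGraph V) (a b : V)
    (hcard : 6 ≤ Fintype.card V) (hmin : IsMinimal G a b) :
    ∀ x y : V, x ≠ y →
      Indecomposable (G.induce (({x, y} : Set V)ᶜ)) →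
      x = a ∨ x = b ∨ y = a ∨ y = b := by
  intro x y hxy hind
  by_contra! h
  refine hmin.decomposable_induce_compl_pair (by omega) hxy ?_ ?_ hind
  · rintro (rfl | rfl) <;> simp_all
  · rintro (rfl | rfl) <;> simp_all

theorem minimal_covered {V : Type*} [Fintype V] (G : SimpleGraph V) (a b : V)
    (hab : a ≠ b) (hcard : 6 ≤ Fintype.card V) (hmin : IsMinimal G a b) :
    ∀ x y : V, x ≠ y →
      Indecomposable (G.induce (({x, y} : Set V)ᶜ)) →
      x = a ∨ x = b ∨ y = a ∨ y = b :=
  minimal_covered_general G a b hcard hmin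
end

section
/- Let G = (V,E) be a graph, X ⊆ V with |X| ≥ 4 and G[X] indecomposable. Then the sets Ext(X), ⟨X⟩, and X(u) for u ∈ X are pairwise disjoint and their union is V \ X. -/
open SimpleGraph

variable {V : Type*}

/-!
A vertex `v ∈ ⟨X⟩` makes `X` a nontrivial interval of `G[X ∪ {v}]`, and `v ∈ X(u)` makes `{u, v}`
one, so neither kind lies in `Ext(X)`. They also exclude each other: `v ∈ ⟨X⟩ ∩ X(u)` makes
`X \ {u}` an interval of `G[X]`, and `v ∈ X(u) ∩ X(u')` makes `{u, u'}` one. Conversely, an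
interval `I` of `G[X ∪ {v}]` meets `X` in an interval of `G[X]`, i.e. in `∅`, a singleton `{u}` or
all of `X`; if `I` is nontrivial, the last two cases force `v ∈ X(u)` or `v ∈ ⟨X⟩`.
-/

theorem Set.not_subset_pair_of_two_lt_ncard {α : Type*} {s : Set α} (hs : 2 < s.ncard) (a b : α) :
    ¬ s ⊆ {a, b} := by
  intro h
  have hpair : ({a, b} : Set α).ncard ≤ 2 :=
    (Set.ncard_insert_le a {b}).trans (by rw [Set.ncard_singleton])
  have := Set.ncard_le_ncard h (Set.toFinite _)
  omega

section Intervals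

variable {G : SimpleGraph V} {X Y I : Set V}

theorem isInterval_induce_iff :
    IsInterval (G.induce Y) (Subtype.val ⁻¹' I) ↔
      ∀ x ∈ Y \ I, ∀ a ∈ Y ∩ I, ∀ b ∈ Y ∩ I, (G.Adj a x ↔ G.Adj b x) := by
  constructor
  · rintro h x ⟨hxY, hxI⟩ a ⟨haY, haI⟩ b ⟨hbY, hbI⟩
    exact h ⟨x, hxY⟩ hxI ⟨a, haY⟩ haI ⟨b, hbY⟩ hbI
  · rintro h ⟨x, hxY⟩ hxI ⟨a, haY⟩ haI ⟨b, hbY⟩ hbI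
    exact h x ⟨hxY, hxI⟩ a ⟨haY, haI⟩ b ⟨hbY, hbI⟩

theorem IsInterval.induce_of_subset (h : IsInterval (G.induce Y) (Subtype.val ⁻¹' I))
    (hXY : X ⊆ Y) : IsInterval (G.induce X) (Subtype.val ⁻¹' I) := by
  rw [isInterval_induce_iff] at h ⊢
  exact fun x hx a ha b hb => h x ⟨hXY hx.1, hx.2⟩ a ⟨hXY ha.1, ha.2⟩ b ⟨hXY hb.1, hb.2⟩

theorem indecomposable_induce_iff :
    Indecomposable (G.induce Y) ↔ ∀ I : Set V,
      IsInterval (G.induce Y) (Subtype.val ⁻¹' I) → (Y ∩ I).Subsingleton ∨ Y ⊆ I := by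
  constructor
  · intro h I hI
    rcases h _ hI with h | h | ⟨x, hx⟩
    · exact Or.inl (by simp [← Subtype.image_preimage_coe, h])
    · exact Or.inr fun y hy => (h ▸ Set.mem_univ _ : (⟨y, hy⟩ : Y) ∈ Subtype.val ⁻¹' I)
    · exact Or.inl (by simp [← Subtype.image_preimage_coe, hx])
  · intro h I hI
    rw [← Set.preimage_image_eq I Subtype.val_injective] at hI
    rcases h _ hI with hs | hsub
    · rw [Set.inter_eq_right.2 (Subtype.coe_image_subset Y I)] at hs
      exact Or.imp_right Or.inr (Set.subsingleton_of_image Subtype.val_injective I hs).eq_empty_or_singleton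
    · refine Or.inr (Or.inl (Set.eq_univ_of_forall fun y => ?_))
      obtain ⟨z, hz, e⟩ := hsub y.2
      exact Subtype.ext e ▸ hz

end Intervals

section Partition

variable {G : SimpleGraph V} {X : Set V} {u v : V}

theorem mem_angleSet_iff (hv : v ∉ X) :
    v ∈ AngleSet G X ↔ ∀ a ∈ X, ∀ b ∈ X, (G.Adj a v ↔ G.Adj b v) := by
  refine ⟨?_, fun h => ⟨hv, ?_⟩⟩
  · rintro ⟨-, hall | hnone⟩ a ha b hb
    · exact iff_of_true (hall a ha).symm (hall b hb).symm
    · exact iff_of_false (fun h => hnone a ha h.symm) (fun h => hnone b hb h.symm)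
  · by_cases hsome : ∃ x ∈ X, G.Adj v x
    · obtain ⟨x, hx, hvx⟩ := hsome
      exact Or.inl fun a ha => ((h a ha x hx).2 hvx.symm).symm
    · push Not at hsome
      exact Or.inr hsome

theorem mem_xSet_iff (hu : u ∈ X) (hv : v ∉ X) :
    v ∈ XSet G X u ↔ ∀ x ∈ X, x ≠ u → (G.Adj u x ↔ G.Adj v x) := by
  simp only [XSet, Set.mem_ofPred_eq, hv, not_false_eq_true, true_and, isInterval_induce_iff]
  constructor
  · intro h x hx hxu
    have hxv : x ≠ v := fun hxv => hv (hxv ▸ hx)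
    exact h x ⟨Or.inl hx, by simp [hxu, hxv]⟩ u ⟨Or.inl hu, by simp⟩ v ⟨Or.inr rfl, by simp⟩
  · rintro h x ⟨hxY, hxuv⟩ a ⟨-, ha⟩ b ⟨-, hb⟩
    simp only [Set.mem_insert_iff, Set.mem_singleton_iff, not_or] at hxuv
    have hx : x ∈ X := hxY.resolve_right hxuv.2
    rcases ha with rfl | rfl <;> rcases hb with rfl | rfl
    exacts [Iff.rfl, h x hx hxuv.1, (h x hx hxuv.1).symm, Iff.rfl]

theorem disjoint_extSet_angleSet (hX : X.Nontrivial) : Disjoint (ExtSet G X) (AngleSet G X) := by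
  rw [Set.disjoint_left]
  rintro v ⟨-, hext⟩ hv
  have hvX := hv.1
  rw [mem_angleSet_iff hvX] at hv
  have hI : IsInterval (G.induce (X ∪ {v})) (Subtype.val ⁻¹' X) := by
    rw [isInterval_induce_iff]
    rintro x ⟨hx, hxX⟩ a ⟨-, ha⟩ b ⟨-, hb⟩
    obtain rfl : x = v := hx.resolve_left hxX
    exact hv a ha b hb
  rcases indecomposable_induce_iff.1 hext X hI with hs | hsub
  · exact hX.not_subsingleton (by rwa [Set.union_inter_cancel_left] at hs)
  · exact hvX (hsub (Set.mem_union_right _ rfl))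

theorem disjoint_extSet_xSet (hX : 2 < X.ncard) (hu : u ∈ X) :
    Disjoint (ExtSet G X) (XSet G X u) := by
  rw [Set.disjoint_left]
  rintro v ⟨-, hext⟩ ⟨hvX, hI⟩
  rcases indecomposable_induce_iff.1 hext {u, v} hI with hs | hsub
  · exact hvX (hs ⟨Or.inl hu, Or.inl rfl⟩ ⟨Or.inr rfl, Or.inr rfl⟩ ▸ hu)
  · exact Set.not_subset_pair_of_two_lt_ncard hX u v (Set.subset_union_left.trans hsub)

theorem disjoint_angleSet_xSet (hX : 2 < X.ncard) (hind : Indecomposable (G.induce X))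
    (hu : u ∈ X) : Disjoint (AngleSet G X) (XSet G X u) := by
  rw [Set.disjoint_left]
  intro v hA hU
  have hvX := hA.1
  rw [mem_angleSet_iff hvX] at hA
  rw [mem_xSet_iff hu hvX] at hU
  have hI : IsInterval (G.induce X) (Subtype.val ⁻¹' {u}ᶜ) := by
    rw [isInterval_induce_iff]
    rintro x ⟨-, hxu⟩ a ⟨ha, hau⟩ b ⟨hb, hbu⟩
    obtain rfl : x = u := not_not.1 hxu
    rw [G.adj_comm, hU a ha hau, G.adj_comm, G.adj_comm b, hU b hb hbu, G.adj_comm v]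
    exact hA a ha b hb
  rcases indecomposable_induce_iff.1 hind _ hI with hs | hsub
  · have hnt : 1 < (X \ {u}).ncard := by rw [Set.ncard_sdiff_singleton_of_mem hu]; omega
    exact (Set.one_lt_ncard_iff_nontrivial_and_finite.1 hnt).1.not_subsingleton hs
  · exact hsub hu rfl

theorem disjoint_xSet_xSet (hX : 2 < X.ncard) (hind : Indecomposable (G.induce X))
    {u' : V} (hu : u ∈ X) (hu' : u' ∈ X) (huu' : u ≠ u') :
    Disjoint (XSet G X u) (XSet G X u') := by
  rw [Set.disjoint_left]
  intro v hU hU'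
  have hvX := hU.1
  rw [mem_xSet_iff hu hvX] at hU
  rw [mem_xSet_iff hu' hvX] at hU'
  have hI : IsInterval (G.induce X) (Subtype.val ⁻¹' {u, u'}) := by
    rw [isInterval_induce_iff]
    rintro x ⟨hx, hxuu'⟩ a ⟨-, ha⟩ b ⟨-, hb⟩
    simp only [Set.mem_insert_iff, Set.mem_singleton_iff, not_or] at hxuu'
    have key : G.Adj u x ↔ G.Adj u' x := (hU x hx hxuu'.1).trans (hU' x hx hxuu'.2).symm
    rcases ha with rfl | rfl <;> rcases hb with rfl | rfl
    exacts [Iff.rfl, key, key.symm, Iff.rfl]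
  rcases indecomposable_induce_iff.1 hind _ hI with hs | hsub
  · exact huu' (hs ⟨hu, Or.inl rfl⟩ ⟨hu', Or.inr rfl⟩)
  · exact Set.not_subset_pair_of_two_lt_ncard hX u u' hsub

theorem mem_extSet_of_notMem_angleSet_of_notMem_xSet (hind : Indecomposable (G.induce X))
    (hvX : v ∉ X) (hA : v ∉ AngleSet G X) (hU : ∀ u ∈ X, v ∉ XSet G X u) :
    v ∈ ExtSet G X := by
  refine ⟨hvX, ?_⟩
  rw [indecomposable_induce_iff] at hind ⊢
  intro J hJ
  have hJX := hind J (hJ.induce_of_subset Set.subset_union_left)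
  rw [isInterval_induce_iff] at hJ
  by_cases hvJ : v ∈ J
  · rcases hJX with hs | hsub
    · rcases hs.eq_empty_or_singleton with he | ⟨u, hu⟩
      · left
        rw [Set.union_inter_distrib_right, he, Set.singleton_inter_of_mem hvJ, Set.empty_union]
        exact Set.subsingleton_singleton
      · have huXJ : u ∈ X ∩ J := hu ▸ rfl
        refine absurd ((mem_xSet_iff huXJ.1 hvX).2 fun x hx hxu => ?_) (hU u huXJ.1)
        have hxJ : x ∉ J := fun hxJ => hxu (hu ▸ ⟨hx, hxJ⟩ : x ∈ ({u} : Set V))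
        exact hJ x ⟨Or.inl hx, hxJ⟩ u ⟨Or.inl huXJ.1, huXJ.2⟩ v ⟨Or.inr rfl, hvJ⟩
    · exact Or.inr (Set.union_subset hsub (Set.singleton_subset_iff.2 hvJ))
  · rcases hJX with hs | hsub
    · left
      rwa [Set.union_inter_distrib_right, Set.singleton_inter_eq_empty.2 hvJ, Set.union_empty]
    · refine absurd ((mem_angleSet_iff hvX).2 fun a ha b hb => ?_) hA
      exact hJ v ⟨Or.inr rfl, hvJ⟩ a ⟨Or.inl ha, hsub ha⟩ b ⟨Or.inl hb, hsub hb⟩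

theorem extSet_union_angleSet_union_biUnion_xSet (hind : Indecomposable (G.induce X)) :
    ExtSet G X ∪ AngleSet G X ∪ (⋃ u ∈ X, XSet G X u) = Set.univ \ X := by
  ext v
  simp only [Set.mem_union, Set.mem_iUnion, Set.mem_sdiff, Set.mem_univ, true_and, exists_prop]
  refine ⟨by rintro ((h | h) | ⟨u, -, h⟩) <;> exact h.1, fun hvX => ?_⟩
  by_contra! h
  exact h.1.1 (mem_extSet_of_notMem_angleSet_of_notMem_xSet hind hvX h.1.2 h.2)

end Partition

theorem partition_pX_general {V : Type*} (G : SimpleGraph V) (X : Set V)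
    (hX : 4 ≤ X.ncard) (hind : Indecomposable (G.induce X)) :
    Disjoint (ExtSet G X) (AngleSet G X) ∧
    (∀ u ∈ X, Disjoint (ExtSet G X) (XSet G X u)) ∧
    (∀ u ∈ X, Disjoint (AngleSet G X) (XSet G X u)) ∧
    (∀ u ∈ X, ∀ u' ∈ X, u ≠ u' → Disjoint (XSet G X u) (XSet G X u')) ∧
    ExtSet G X ∪ AngleSet G X ∪ (⋃ u ∈ X, XSet G X u) = Set.univ \ X := by
  have hX₃ : 2 < X.ncard := by omega
  have hnt : X.Nontrivial := (Set.one_lt_ncard_iff_nontrivial_and_finite.1 (by omega)).1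
  exact ⟨disjoint_extSet_angleSet hnt, fun u hu => disjoint_extSet_xSet hX₃ hu,
    fun u hu => disjoint_angleSet_xSet hX₃ hind hu,
    fun u hu u' hu' => disjoint_xSet_xSet hX₃ hind hu hu',
    extSet_union_angleSet_union_biUnion_xSet hind⟩

theorem partition_pX {V : Type*} [Fintype V] (G : SimpleGraph V) (X : Set V)
    (hX : 4 ≤ X.ncard) (hind : Indecomposable (G.induce X)) :
    Disjoint (ExtSet G X) (AngleSet G X) ∧
    (∀ u ∈ X, Disjoint (ExtSet G X) (XSet G X u)) ∧
    (∀ u ∈ X, Disjoint (AngleSet G X) (XSet G X u)) ∧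
    (∀ u ∈ X, ∀ u' ∈ X, u ≠ u' → Disjoint (XSet G X u) (XSet G X u')) ∧
    ExtSet G X ∪ AngleSet G X ∪ (⋃ u ∈ X, XSet G X u) = Set.univ \ X :=
  partition_pX_general G X hX hind
end

section
/- Let G = (V,E) be a graph and X ⊆ V with |X| ≥ 4 and G[X] indecomposable. If v ∈ ⟨X⟩ and w ∈ V \ (X ∪ ⟨X⟩), and G[X ∪ {v,w}] is decomposable, then X ∪ {w} is an interval of G[X ∪ {v,w}]. -/
open SimpleGraph

variable {V : Type*}

/-!
Let `S` be a nontrivial proper interval of `G[X ∪ {v, w}]`. Its trace `X ∩ S` is an interval of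
`G[X]`, hence empty, all of `X`, or a single vertex `x₀`. Since `w` splits `X` and `v` does not,
the trace cannot be empty (then `S = {v, w}` and `v`, `w` would agree on `X`). If it is `X`, then
`w ∈ S` and `v ∉ S`. If it is `{x₀}`, then `v ∈ S` would make `x₀` agree with `v` on `X \ {x₀}`,
so `X \ {x₀}` would be a nontrivial interval of `G[X]`; hence `v ∉ S` and `w ∈ S`. Either way `v`
does not distinguish `w` from some vertex of `X`, so `v` does not split `X ∪ {w}`.
-/

namespace SimpleGraph

variable {G : SimpleGraph V} {X Y S : Set V} {v w x y a : V}

def Splits (G : SimpleGraph V) (x : V) (S : Set V) : Prop :=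
  ∃ a ∈ S, ∃ b ∈ S, G.Adj a x ∧ ¬ G.Adj b x

/-- For `S ⊆ Y`: `S` is an interval of `G[Y]`, stated without passing to the subtype `Y`. -/
def IsIntervalIn (G : SimpleGraph V) (Y S : Set V) : Prop :=
  ∀ x ∈ Y \ S, ¬ G.Splits x S

theorem not_splits_iff : ¬ G.Splits x S ↔ ∀ a ∈ S, ∀ b ∈ S, (G.Adj a x ↔ G.Adj b x) := by
  simp only [Splits, not_exists, not_and, not_not]
  exact ⟨fun h a ha b hb => ⟨h a ha b hb, h b hb a ha⟩, fun h a ha b hb => (h a ha b hb).1⟩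

theorem not_splits_iff_forall_or_forall :
    ¬ G.Splits x S ↔ (∀ a ∈ S, G.Adj x a) ∨ (∀ a ∈ S, ¬ G.Adj x a) := by
  rw [not_splits_iff]
  constructor
  · intro h
    by_cases hex : ∃ a ∈ S, G.Adj x a
    · obtain ⟨a, ha, hxa⟩ := hex
      exact Or.inl fun b hb => G.adj_symm ((h a ha b hb).1 (G.adj_symm hxa))
    · exact Or.inr fun b hb hxb => hex ⟨b, hb, hxb⟩
  · rintro (h | h) a ha b hb
    · exact iff_of_true (G.adj_symm (h a ha)) (G.adj_symm (h b hb))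
    · exact iff_of_false (fun hax => h a ha (G.adj_symm hax)) (fun hbx => h b hb (G.adj_symm hbx))

theorem mem_angleSet_iff : v ∈ AngleSet G X ↔ v ∉ X ∧ ¬ G.Splits v X := by
  rw [not_splits_iff_forall_or_forall]
  rfl

theorem Splits.mono {T : Set V} (h : G.Splits x S) (hST : S ⊆ T) : G.Splits x T :=
  let ⟨a, ha, b, hb, hax, hbx⟩ := h
  ⟨a, hST ha, b, hST hb, hax, hbx⟩

theorem Splits.of_forall_adj_iff (h : G.Splits x S) (hxy : ∀ a ∈ S, (G.Adj x a ↔ G.Adj y a)) :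
    G.Splits y S := by
  obtain ⟨a, ha, b, hb, hax, hbx⟩ := h
  refine ⟨a, ha, b, hb, ?_, ?_⟩
  · exact G.adj_symm ((hxy a ha).1 (G.adj_symm hax))
  · exact fun hby => hbx (G.adj_symm ((hxy b hb).2 (G.adj_symm hby)))

theorem not_splits_insert (hS : ¬ G.Splits x S) (ha : a ∈ S) (haw : G.Adj a x ↔ G.Adj w x) :
    ¬ G.Splits x (insert w S) := by
  have hsame : ∀ b ∈ insert w S, (G.Adj b x ↔ G.Adj a x) := by
    rintro b (rfl | hb)
    exacts [haw.symm, not_splits_iff.1 hS b hb a ha]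
  exact not_splits_iff.2 fun b hb c hc => (hsame b hb).trans (hsame c hc).symm

theorem IsIntervalIn.adj_iff {b : V} (h : G.IsIntervalIn Y S) (hx : x ∈ Y) (hxS : x ∉ S)
    (ha : a ∈ S) (hb : b ∈ S) : G.Adj a x ↔ G.Adj b x :=
  not_splits_iff.1 (h x ⟨hx, hxS⟩) a ha b hb

theorem IsIntervalIn.inter (h : G.IsIntervalIn Y S) (hXY : X ⊆ Y) : G.IsIntervalIn X (X ∩ S) :=
  fun x hx hsplit =>
    h x ⟨hXY hx.1, fun hxS => hx.2 ⟨hx.1, hxS⟩⟩ (hsplit.mono Set.inter_subset_right)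

theorem isIntervalIn_of_diff_subset_singleton (hYS : Y \ S ⊆ {x}) (hx : ¬ G.Splits x S) :
    G.IsIntervalIn Y S := fun y hy => by
  rwa [hYS hy]

theorem isInterval_induce_preimage_iff (hS : S ⊆ Y) :
    IsInterval (G.induce Y) (Subtype.val ⁻¹' S) ↔ G.IsIntervalIn Y S := by
  simp only [IsInterval, IsIntervalIn, not_splits_iff, Subtype.forall, Set.mem_preimage,
    comap_adj, Function.Embedding.subtype_apply, Set.mem_sdiff, and_imp]
  exact ⟨fun h x hx hxS a ha b hb => h x hx hxS a (hS ha) ha b (hS hb) hb,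
    fun h x hx hxS a _ ha b _ hb => h x hx hxS a ha b hb⟩

end SimpleGraph

variable {G : SimpleGraph V} {X Y T : Set V} {x : V}

theorem Indecomposable.eq_empty_or_eq_or_eq_singleton (h : Indecomposable (G.induce X))
    (hTX : T ⊆ X) (hT : G.IsIntervalIn X T) : T = ∅ ∨ T = X ∨ ∃ x, T = {x} := by
  rw [← Set.inter_eq_right.2 hTX, ← Subtype.image_preimage_coe]
  rcases h _ ((isInterval_induce_preimage_iff hTX).2 hT) with h | h | ⟨x, h⟩ <;> rw [h]
  · exact Or.inl (Set.image_empty _)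
  · exact Or.inr (Or.inl (Subtype.coe_image_univ X))
  · exact Or.inr (Or.inr ⟨x, Set.image_singleton⟩)

theorem Indecomposable.not_isIntervalIn_diff_singleton (h : Indecomposable (G.induce X))
    (hX : 3 ≤ X.ncard) (hx : x ∈ X) : ¬ G.IsIntervalIn X (X \ {x}) := by
  intro hI
  have hcard : 2 ≤ (X \ {x}).ncard := by
    have := Set.ncard_sdiff_singleton_add_one hx (Set.finite_of_ncard_pos (by omega))
    omega
  rcases h.eq_empty_or_eq_or_eq_singleton Set.sdiff_subset hI with h | h | ⟨y, h⟩
  · simp [h] at hcard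
  · exact (h.symm ▸ hx : x ∈ X \ {x}).2 rfl
  · simp [h] at hcard

theorem Decomposable.exists_isIntervalIn (h : Decomposable (G.induce Y)) :
    ∃ S ⊆ Y, G.IsIntervalIn Y S ∧ S.Nontrivial ∧ ¬ Y ⊆ S := by
  simp only [Decomposable, Indecomposable, not_forall, not_or] at h
  obtain ⟨I, hI, hIne, hIuniv, hIsingle⟩ := h
  have hIY : Subtype.val '' I ⊆ Y := Subtype.coe_image_subset Y I
  refine ⟨_, hIY, ?_, ?_, ?_⟩
  · rwa [← isInterval_induce_preimage_iff hIY, Set.preimage_image_eq _ Subtype.val_injective]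
  · obtain ⟨y, rfl⟩ | hnt :=
      (Set.nonempty_iff_ne_empty.2 hIne).exists_eq_singleton_or_nontrivial
    · exact absurd ⟨y, rfl⟩ hIsingle
    · exact hnt.image Subtype.val_injective
  · intro hYI
    refine hIuniv (Set.eq_univ_of_forall fun y => ?_)
    obtain ⟨z, hz, hzy⟩ := hYI y.2
    rwa [← Subtype.ext hzy]

namespace SimpleGraph

variable {G : SimpleGraph V} {X S : Set V} {v w : V}

theorem exists_adj_iff_of_isIntervalIn (hind : Indecomposable (G.induce X)) (hX : 3 ≤ X.ncard)
    (hv : ¬ G.Splits v X) (hw : G.Splits w X) (hSY : S ⊆ X ∪ {v, w})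
    (hS : G.IsIntervalIn (X ∪ {v, w}) S) (hnt : S.Nontrivial) (hne : ¬ X ∪ {v, w} ⊆ S) :
    ∃ x ∈ X, (G.Adj x v ↔ G.Adj w v) := by
  have hvY : v ∈ X ∪ {v, w} := by simp
  have hwY : w ∈ X ∪ {v, w} := by simp
  rcases hind.eq_empty_or_eq_or_eq_singleton Set.inter_subset_left
    (hS.inter Set.subset_union_left) with hT | hT | ⟨x₀, hT⟩
  · have hSvw : S ⊆ {v, w} := fun s hs =>
      (hSY hs).resolve_left fun hsX => Set.eq_empty_iff_forall_notMem.1 hT s ⟨hsX, hs⟩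
    have hvS : v ∈ S := by
      obtain ⟨s, hs, hsw⟩ := hnt.exists_ne w
      rcases hSvw hs with rfl | rfl
      exacts [hs, absurd rfl hsw]
    have hwS : w ∈ S := by
      obtain ⟨s, hs, hsv⟩ := hnt.exists_ne v
      rcases hSvw hs with rfl | rfl
      exacts [absurd rfl hsv, hs]
    refine (hv (hw.of_forall_adj_iff fun x hx => ?_)).elim
    have hxS : x ∉ S := fun hxS => Set.eq_empty_iff_forall_notMem.1 hT x ⟨hx, hxS⟩
    exact hS.adj_iff (Or.inl hx) hxS hwS hvS
  · have hXS : X ⊆ S := Set.inter_eq_left.1 hT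
    have hwS : w ∈ S := by_contra fun hwS => hS w ⟨hwY, hwS⟩ (hw.mono hXS)
    have hvS : v ∉ S := fun hvS =>
      hne (Set.union_subset hXS (Set.insert_subset hvS (Set.singleton_subset_iff.2 hwS)))
    obtain ⟨x, hx⟩ := Set.nonempty_of_ncard_ne_zero (by omega : X.ncard ≠ 0)
    exact ⟨x, hx, hS.adj_iff hvY hvS (hXS hx) hwS⟩
  · have hx₀ : x₀ ∈ X ∩ S := hT ▸ rfl
    have hvS : v ∉ S := by
      intro hvS
      refine hind.not_isIntervalIn_diff_singleton hX hx₀.1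
        (isIntervalIn_of_diff_subset_singleton (x := x₀) ?_ fun hsplit =>
          hv ((hsplit.of_forall_adj_iff fun a ha => ?_).mono Set.sdiff_subset))
      · rw [Set.sdiff_sdiff_right_self]
        exact Set.inter_subset_right
      · have haS : a ∉ S := fun haS => ha.2 (hT ▸ (⟨ha.1, haS⟩ : a ∈ X ∩ S))
        exact hS.adj_iff (Or.inl ha.1) haS hx₀.2 hvS
    have hwS : w ∈ S := by
      obtain ⟨s, hs, hsx₀⟩ := hnt.exists_ne x₀
      rcases hSY hs with hsX | rfl | rfl
      · have hs' : s ∈ X ∩ S := ⟨hsX, hs⟩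
        rw [hT] at hs'
        exact absurd hs' hsx₀
      · exact absurd hs hvS
      · exact hs
    exact ⟨x₀, hx₀.1, hS.adj_iff hvY hvS hx₀.2 hwS⟩

end SimpleGraph

theorem interval_of_angle_general {V : Type*} (G : SimpleGraph V) (X : Set V)
    (hX : 4 ≤ X.ncard) (hind : Indecomposable (G.induce X))
    (v w : V) (hv : v ∈ AngleSet G X) (hw : w ∉ X ∪ AngleSet G X)
    (hdec : Decomposable (G.induce (X ∪ {v, w}))) :
    IsInterval (G.induce (X ∪ {v, w})) (Subtype.val ⁻¹' (X ∪ {w})) := by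
  have hvX : ¬ G.Splits v X := (mem_angleSet_iff.1 hv).2
  have hwX : G.Splits w X := by_contra fun h =>
    hw (Or.inr (mem_angleSet_iff.2 ⟨fun hwX => hw (Or.inl hwX), h⟩))
  obtain ⟨S, hSY, hS, hnt, hne⟩ := hdec.exists_isIntervalIn
  obtain ⟨x, hx, hxw⟩ := exists_adj_iff_of_isIntervalIn hind (by omega) hvX hwX hSY hS hnt hne
  rw [isInterval_induce_preimage_iff (Set.union_subset_union_right X (by simp)),
    Set.union_singleton]
  refine isIntervalIn_of_diff_subset_singleton ?_ (not_splits_insert hvX hx hxw)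
  rintro y ⟨hyX | rfl | rfl, hy⟩
  · exact absurd (Or.inr hyX) hy
  · rfl
  · exact absurd (Or.inl rfl) hy

theorem interval_of_angle {V : Type*} [Fintype V] (G : SimpleGraph V) (X : Set V)
    (hX : 4 ≤ X.ncard) (hind : Indecomposable (G.induce X))
    (v w : V) (hv : v ∈ AngleSet G X) (hw : w ∉ X ∪ AngleSet G X)
    (hdec : Decomposable (G.induce (X ∪ {v, w}))) :
    IsInterval (G.induce (X ∪ {v, w})) (Subtype.val ⁻¹' (X ∪ {w})) :=
  interval_of_angle_general G X hX hind v w hv hw hdec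
end

section
/- Let G = (V,E) be a graph and X ⊆ V with |X| ≥ 4 and G[X] indecomposable. If v and w are distinct elements of Ext(X) and G[X ∪ {v,w}] is decomposable, then {v,w} is an interval of G[X ∪ {v,w}]. -/
open SimpleGraph

variable {V : Type*}

/-!
A nontrivial interval `J` of `G[X ∪ {v, w}]` restricts to an interval of the indecomposable
graphs `G[X ∪ {v}]` and `G[X ∪ {w}]`, so each of the two traces of `J` is a subsingleton or
everything. A full trace would contain `X`, which is too large to be the other trace, so the
other trace would be full too and `J` would be everything. Two subsingleton traces meeting in a
point of `X` would make `J` a single point, so `J` avoids `X` and must be `{v, w}`.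
-/

theorem indecomposable_iff_subsingleton_or_eq_univ {W : Type*} {H : SimpleGraph W} :
    Indecomposable H ↔ ∀ I, IsInterval H I → I.Subsingleton ∨ I = Set.univ := by
  refine forall₂_congr fun I _ => ?_
  constructor
  · rintro (rfl | h | ⟨x, rfl⟩)
    exacts [.inl Set.subsingleton_empty, .inr h, .inl Set.subsingleton_singleton]
  · rintro (h | h)
    · exact h.eq_empty_or_singleton.imp_right .inr
    · exact .inr (.inl h)

theorem decomposable_iff_exists_nontrivial {W : Type*} {H : SimpleGraph W} :
    Decomposable H ↔ ∃ I, IsInterval H I ∧ I.Nontrivial ∧ I ≠ Set.univ := by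
  simp [Decomposable, indecomposable_iff_subsingleton_or_eq_univ, ← Set.not_subsingleton_iff]

theorem IsInterval.induce_of_subset_s14 {G : SimpleGraph V} {S T J : Set V} (hST : S ⊆ T)
    (hJ : IsInterval (G.induce T) (Subtype.val ⁻¹' J)) :
    IsInterval (G.induce S) (Subtype.val ⁻¹' J) :=
  fun x hx a ha b hb => hJ ⟨x, hST x.2⟩ hx ⟨a, hST a.2⟩ ha ⟨b, hST b.2⟩ hb

theorem Indecomposable.inter_subsingleton_or_subset {G : SimpleGraph V} {S J : Set V}
    (hS : Indecomposable (G.induce S)) (hJ : IsInterval (G.induce S) (Subtype.val ⁻¹' J)) :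
    (S ∩ J).Subsingleton ∨ S ⊆ J := by
  rcases indecomposable_iff_subsingleton_or_eq_univ.1 hS _ hJ with h | h
  · left
    rw [← Subtype.image_preimage_coe]
    exact h.image _
  · right
    rwa [Set.preimage_eq_univ_iff, Subtype.range_coe] at h

theorem Set.not_subset_of_inter_subsingleton_or_subset {X J : Set V} {v w : V}
    (hX : X.Nontrivial) (hJ : ¬ X ∪ {v, w} ⊆ J)
    (hw : ((X ∪ {w}) ∩ J).Subsingleton ∨ X ∪ {w} ⊆ J) : ¬ X ∪ {v} ⊆ J := by
  intro hv
  have hXJ : X ⊆ J := Set.subset_union_left.trans hv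
  rcases hw with hw | hw
  · exact hX.not_subsingleton (hw.anti fun x hx => ⟨.inl hx, hXJ hx⟩)
  · refine hJ (Set.union_subset hXJ (Set.insert_subset ?_ ?_))
    exacts [hv (.inr rfl), Set.singleton_subset_iff.2 (hw (.inr rfl))]

theorem Set.eq_pair_of_inter_subsingleton {X J : Set V} {v w : V}
    (hJ : J ⊆ X ∪ {v, w}) (hJnt : J.Nontrivial)
    (hv : ((X ∪ {v}) ∩ J).Subsingleton) (hw : ((X ∪ {w}) ∩ J).Subsingleton) :
    J = {v, w} := by
  have hJX : ∀ x ∈ J, x ∉ X := by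
    intro x hxJ hxX
    refine hJnt.not_subset_singleton (x := x) fun y hyJ => ?_
    rcases hJ hyJ with hy | rfl | rfl
    · exact hv ⟨.inl hy, hyJ⟩ ⟨.inl hxX, hxJ⟩
    · exact hv ⟨.inr rfl, hyJ⟩ ⟨.inl hxX, hxJ⟩
    · exact hw ⟨.inr rfl, hyJ⟩ ⟨.inl hxX, hxJ⟩
  have hJvw : J ⊆ {v, w} := fun x hx => (hJ hx).resolve_left (hJX x hx)
  rcases Set.subset_pair_iff_eq.1 hJvw with h | h | h | h
  · exact absurd h hJnt.nonempty.ne_empty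
  · exact absurd h.le hJnt.not_subset_singleton
  · exact absurd h.le hJnt.not_subset_singleton
  · exact h

theorem interval_of_ext_general {V : Type*} (G : SimpleGraph V) (X : Set V)
    (hX : 4 ≤ X.ncard)
    (v w : V) (hv : v ∈ ExtSet G X) (hw : w ∈ ExtSet G X)
    (hdec : Decomposable (G.induce (X ∪ {v, w}))) :
    IsInterval (G.induce (X ∪ {v, w})) (Subtype.val ⁻¹' {v, w}) := by
  have hXnt : X.Nontrivial := (Set.one_lt_ncard_iff_nontrivial_and_finite.1 (by omega)).1
  obtain ⟨I, hI, hInt, hIT⟩ := decomposable_iff_exists_nontrivial.1 hdec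
  set J : Set V := Subtype.val '' I
  have hIJ : Subtype.val ⁻¹' J = I := Set.preimage_image_eq I Subtype.val_injective
  have hJT : J ⊆ X ∪ {v, w} := Subtype.coe_image_subset _ I
  have hJnt : J.Nontrivial := hInt.image Subtype.val_injective
  have hTJ : ¬ X ∪ {v, w} ⊆ J := fun h =>
    hIT (by rw [← hIJ, Set.preimage_eq_univ_iff, Subtype.range_coe]; exact h)
  have htrace {u : V} (hu : u ∈ ExtSet G X) (huT : X ∪ {u} ⊆ X ∪ {v, w}) :
      ((X ∪ {u}) ∩ J).Subsingleton ∨ X ∪ {u} ⊆ J :=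
    hu.2.inter_subsingleton_or_subset ((hIJ ▸ hI).induce_of_subset_s14 huT)
  have hvJ := htrace hv (Set.union_subset_union_right X (by simp))
  have hwJ := htrace hw (Set.union_subset_union_right X (by simp))
  have hJ : J = {v, w} := Set.eq_pair_of_inter_subsingleton hJT hJnt
    (hvJ.resolve_right (Set.not_subset_of_inter_subsingleton_or_subset hXnt hTJ hwJ))
    (hwJ.resolve_right (Set.not_subset_of_inter_subsingleton_or_subset hXnt
      (Set.pair_comm v w ▸ hTJ) hvJ))
  rw [hJ] at hIJ
  rwa [hIJ]

theorem interval_of_ext {V : Type*} [Fintype V] (G : SimpleGraph V) (X : Set V)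
    (hX : 4 ≤ X.ncard) (hind : Indecomposable (G.induce X))
    (v w : V) (hv : v ∈ ExtSet G X) (hw : w ∈ ExtSet G X) (hvw : v ≠ w)
    (hdec : Decomposable (G.induce (X ∪ {v, w}))) :
    IsInterval (G.induce (X ∪ {v, w})) (Subtype.val ⁻¹' {v, w}) :=
  interval_of_ext_general G X hX v w hv hw hdec
end
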